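/- arXiv:math/9901038 — 3 statements merged into one kernel-verified Lean document; each statement's English description precedes it below -/
import Mathlib

section
/- For all real numbers $x$ and $t$, one has $x^6 + x^5 + t^5 x + 8t^6 + 7 > 0$. (Consequently, the real locus of the affine curve $y^2 = -(x^6 + x^5 + t^5 x + 8t^6 + 7)$ is empty for every real $t$.) -/
theorem stmt_0 : ∀ x t : ℝ, x ^ 6 + x ^ 5 + t ^ 5 * x + 8 * t ^ 6 + 7 > 0 := by
  intro x t
  have h1 : t ^ 5 * x ≥ -((t^4*x^2 + t^6)/2) := by nlinarith [sq_nonneg (t^2*x + t^3)]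
  have h2 : 3 * (t^4*x^2) ≤ 2*t^6 + x^6 := by
    nlinarith [sq_nonneg (t^3 - t*x^2), sq_nonneg (t*x^2 - x^3), sq_nonneg (t^3 - x^3), sq_nonneg t, sq_nonneg x, sq_nonneg (t*x)]
  have h3 : (5:ℝ)/6 * x^6 + x^5 + 7 > 0 := by
    nlinarith [sq_nonneg (x^3 + x^2), sq_nonneg (x^2 + x), sq_nonneg (x+1), sq_nonneg x, sq_nonneg (x^2-1), sq_nonneg (x^3+1)]
  nlinarith [sq_nonneg t, pow_two_nonneg (t^3)]
end

section
/- Let $\alpha \in \mathbf{C}$ be a root of $P(X) = X^4 - 3X^3 + 7X^2 - 9X + 9$. Then $3\alpha^{-2}$ is not a root of unity; that is, for every integer $n \ge 1$ one has $(3/\alpha^2)^n \neq 1$ (equivalently, $\alpha^{2n} \neq 3^n$). -/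
open Polynomial

theorem stmt_11 (α : ℂ) (hα : α ^ 4 - 3 * α ^ 3 + 7 * α ^ 2 - 9 * α + 9 = 0) :
    ∀ n : ℕ, 1 ≤ n → (3 / α ^ 2) ^ n ≠ 1 := by
  intro n hn h1
  have hα0 : α ≠ 0 := by
    intro h
    rw [h] at hα
    norm_num at hα
  have hα2 : (α : ℂ) ^ 2 ≠ 0 := pow_ne_zero _ hα0
  set ζ : ℂ := α ^ 2 / 3 with hζdef
  have hζ0 : ζ ≠ 0 := by
    rw [hζdef]
    exact div_ne_zero hα2 (by norm_num)
  have hinv : ζ⁻¹ = 3 / α ^ 2 := by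
    rw [hζdef]
    field_simp
  have hζn : ζ ^ n = 1 := by
    have h2 : (ζ⁻¹) ^ n = 1 := by rw [hinv]; exact h1
    rwa [inv_pow, inv_eq_one] at h2
  have hint : IsIntegral ℤ ζ := by
    refine ⟨X ^ n - 1, ?_, ?_⟩
    · exact monic_X_pow_sub_C (1 : ℤ) (by omega)
    · simp [hζn]
  have hintinv : IsIntegral ℤ ζ⁻¹ := by
    have h3 : ζ⁻¹ = ζ ^ (n - 1) := by
      have h4 : ζ * ζ ^ (n - 1) = 1 := by
        rw [← pow_succ']
        have h5 : n - 1 + 1 = n := by omega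
        rw [h5, hζn]
      exact inv_eq_of_mul_eq_one_right h4
    rw [h3]
    exact hint.pow _
  set t : ℂ := ζ + ζ⁻¹ with htdef
  have hintt : IsIntegral ℤ t := hint.add hintinv
  have key : α ^ 8 + 5 * α ^ 6 + 13 * α ^ 4 + 45 * α ^ 2 + 81 = 0 := by
    linear_combination (α ^ 4 + 3 * α ^ 3 + 7 * α ^ 2 + 9 * α + 9) * hα
  have ht : 9 * t ^ 2 + 15 * t - 5 = 0 := by
    rw [htdef, hinv, hζdef]
    field_simp
    linear_combination 9 * key
  -- t is not rational
  have hnotrange : t ∉ (algebraMap ℚ ℂ).range := by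
    rintro ⟨q, hq⟩
    have hq' : 9 * q ^ 2 + 15 * q - 5 = 0 := by
      have h4 : 9 * (q : ℂ) ^ 2 + 15 * (q : ℂ) - 5 = 0 := by
        rw [show ((q : ℂ)) = t from hq]; exact ht
      exact_mod_cast h4
    set r : ℚ := 2 * q + 5 / 3 with hrdef
    have hr5 : r ^ 2 = 5 := by rw [hrdef]; nlinarith [hq']
    have hirr : Irrational (Real.sqrt 5) := by
      have := (by norm_num : Nat.Prime 5).irrational_sqrt
      simpa using this
    have h5r : Real.sqrt 5 = ((|r| : ℚ) : ℝ) := by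
      rw [show ((5 : ℝ)) = ((r : ℝ)) ^ 2 by exact_mod_cast hr5.symm, Real.sqrt_sq_eq_abs]
      push_cast
      ring
    exact Rat.not_irrational |r| (h5r ▸ hirr)
  -- the minimal polynomial of t
  set p : ℚ[X] := X ^ 2 + C (5 / 3 : ℚ) * X + C (-(5 / 9) : ℚ) with hpdef
  have hpmonic : p.Monic := by
    rw [hpdef]; monicity!
  have hpdeg : p.natDegree = 2 := by rw [hpdef]; compute_degree!
  have hpeval : aeval t p = 0 := by
    rw [hpdef]
    simp only [map_add, map_mul, aeval_X_pow, aeval_X, aeval_C]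
    rw [show ((algebraMap ℚ ℂ) (5 / 3 : ℚ)) = 5 / 3 by norm_num,
      show ((algebraMap ℚ ℂ) (-(5 / 9) : ℚ)) = -(5 / 9) by norm_num]
    linear_combination ht / 9
  have hQt : IsIntegral ℚ t := hintt.tower_top
  have hdvd : minpoly ℚ t ∣ p := minpoly.dvd ℚ t hpeval
  have hge : 2 ≤ (minpoly ℚ t).natDegree := (minpoly.two_le_natDegree_iff hQt).mpr hnotrange
  have heq : p = minpoly ℚ t :=
    Polynomial.eq_of_monic_of_dvd_of_natDegree_le (minpoly.monic hQt) hpmonic hdvd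
      (by rw [hpdeg]; exact hge)
  have hmap : minpoly ℚ t = (minpoly ℤ t).map (algebraMap ℤ ℚ) :=
    minpoly.isIntegrallyClosed_eq_field_fractions' ℚ hintt
  have hc1 : p.coeff 1 = (5 / 3 : ℚ) := by
    rw [hpdef]
    simp [coeff_X_pow]
  have hc2 : p.coeff 1 = (((minpoly ℤ t).coeff 1 : ℤ) : ℚ) := by
    rw [heq, hmap, coeff_map]
    simp
  have h35 : (3 : ℤ) * (minpoly ℤ t).coeff 1 = 5 := by
    have : (3 : ℚ) * (((minpoly ℤ t).coeff 1 : ℤ) : ℚ) = 5 := by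
      rw [← hc2, hc1]; norm_num
    exact_mod_cast this
  omega
end

section
/- Let $\alpha \in \mathbf{C}$ be a root of $P(X) = X^4 - 3X^3 + 7X^2 - 9X + 9$. Then for every integer $n \ge 1$, the field extension degree $[\mathbf{Q}(\alpha^n) : \mathbf{Q}]$ equals $4$. -/
namespace Stmt12

def Xs : ℕ → ℤ × ℤ × ℤ × ℤ
  | 0 => (2, 0, 0, 1)
  | n+1 =>
    ((Xs n).2.2.1, (Xs n).2.2.2,
      -(Xs n).2.2.2 - 3 * (Xs n).1, (Xs n).2.2.1 + 3 * (Xs n).2.2.2 - 3 * (Xs n).2.1)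

def xx (n : ℕ) : ℤ := (Xs n).1
def yy (n : ℕ) : ℤ := (Xs n).2.1

lemma xx_rec (n : ℕ) : xx (n+2) = -yy (n+1) - 3 * xx n := rfl
lemma yy_rec (n : ℕ) : yy (n+2) = xx (n+1) + 3 * yy (n+1) - 3 * yy n := rfl

def f8 (n : ℕ) : ZMod 8 × ZMod 8 × ZMod 8 × ZMod 8 :=
  ((xx n : ZMod 8), (yy n : ZMod 8), (xx (n+1) : ZMod 8), (yy (n+1) : ZMod 8))

lemma f8_succ (n : ℕ) :
    f8 (n+1) = ((f8 n).2.2.1, (f8 n).2.2.2,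
      -(f8 n).2.2.2 - 3 * (f8 n).1, (f8 n).2.2.1 + 3 * (f8 n).2.2.2 - 3 * (f8 n).2.1) := by
  simp only [f8, show n+1+1 = n+2 from rfl, xx_rec, yy_rec]
  push_cast
  exact Prod.ext rfl (Prod.ext rfl (Prod.ext (by ring) (by ring)))

lemma per8 : Function.Periodic f8 20 := by
  intro n
  induction n with
  | zero => decide
  | succ n ih =>
      rw [show n + 1 + 20 = (n + 20) + 1 from by ring, f8_succ, ih, ← f8_succ]

lemma f8_mod (n : ℕ) : f8 n = f8 (n % 20) := (per8.map_mod_nat n).symm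

lemma s_ne_zero (n : ℕ) : 2 * xx n + 3 * yy n ≠ 0 := by
  intro h
  have h8 : ((2 * xx n + 3 * yy n : ℤ) : ZMod 8) = 0 := by rw [h]; simp
  have hval : 2 * (f8 n).1 + 3 * (f8 n).2.1 = 0 := by
    simp only [f8]; push_cast at h8 ⊢; exact h8
  rw [f8_mod] at hval
  have hlt : n % 20 < 20 := Nat.mod_lt _ (by norm_num)
  revert hval
  have : ∀ r < 20, ¬ (2 * (f8 r).1 + 3 * (f8 r).2.1 = 0) := by decide
  exact this _ hlt

lemma y_odd_ne_zero (n : ℕ) (hn : n % 2 = 1) : yy n ≠ 0 := by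
  intro h
  have h8 : ((yy n : ℤ) : ZMod 8) = 0 := by rw [h]; simp
  have hval : (f8 n).2.1 = 0 := h8
  rw [f8_mod] at hval
  have hlt : n % 20 < 20 := Nat.mod_lt _ (by norm_num)
  have hpar : n % 20 % 2 = 1 := by
    rw [Nat.mod_mod_of_dvd n (by norm_num : (2:ℕ) ∣ 20)]; exact hn
  revert hval
  have : ∀ r < 20, r % 2 = 1 → ¬ ((f8 r).2.1 = 0) := by decide
  exact this _ hlt hpar

end Stmt12

open IntermediateField Stmt12 Polynomial Module

theorem stmt_12 (α : ℂ) (hα : α ^ 4 - 3 * α ^ 3 + 7 * α ^ 2 - 9 * α + 9 = 0) :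
    ∀ n : ℕ, 1 ≤ n → Module.finrank ℚ ℚ⟮α ^ n⟯ = 4 := by
  have hα0 : α ≠ 0 := by
    intro h; rw [h] at hα; norm_num at hα
  -- a := α + 3/α satisfies a² = 3a - 1
  have ha2 : (α + 3 * α⁻¹) ^ 2 = 3 * (α + 3 * α⁻¹) - 1 := by
    have key : (α + 3 * α⁻¹) ^ 2 - (3 * (α + 3 * α⁻¹) - 1)
        = (α ^ 4 - 3 * α ^ 3 + 7 * α ^ 2 - 9 * α + 9) * (α⁻¹) ^ 2 := by
      field_simp
      ring
    have h2 := key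
    rw [hα, zero_mul] at h2
    linear_combination h2
  -- a is real: a = (±√5 + 3)/2
  have hs5 : ((Real.sqrt 5 : ℝ) : ℂ) ^ 2 = 5 := by
    rw [← Complex.ofReal_pow, Real.sq_sqrt (by norm_num : (5:ℝ) ≥ 0)]
    norm_num
  have hw : (2 * (α + 3 * α⁻¹) - 3) ^ 2 = 5 := by linear_combination 4 * ha2
  have hfac0 : (2 * (α + 3 * α⁻¹) - 3 - ((Real.sqrt 5 : ℝ) : ℂ))
      * (2 * (α + 3 * α⁻¹) - 3 + ((Real.sqrt 5 : ℝ) : ℂ)) = 0 := by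
    linear_combination hw - hs5
  have hAex : ∃ A : ℝ, ((A : ℝ) : ℂ) = α + 3 * α⁻¹ := by
    rcases mul_eq_zero.mp hfac0 with h | h
    · exact ⟨(Real.sqrt 5 + 3) / 2, by push_cast; linear_combination -h / 2⟩
    · exact ⟨(-Real.sqrt 5 + 3) / 2, by push_cast; linear_combination -h / 2⟩
  obtain ⟨A, hA⟩ := hAex
  have hA2 : A ^ 2 = 3 * A - 1 := by
    have : ((A : ℝ) : ℂ) ^ 2 = 3 * ((A : ℝ) : ℂ) - 1 := by rw [hA]; exact ha2
    exact_mod_cast this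
  have hA3 : A < 3 := by nlinarith [hA2, sq_nonneg (A - 3)]
  -- A is irrational
  have h5irr : Irrational (Real.sqrt 5) := by
    have := (by norm_num : Nat.Prime 5).irrational_sqrt
    simpa using this
  have hAirr : Irrational A := by
    rintro ⟨q, hq⟩
    have hq2 : (q : ℝ) ^ 2 = 3 * (q : ℝ) - 1 := by rw [hq]; exact hA2
    have hq2' : q ^ 2 = 3 * q - 1 := by exact_mod_cast hq2
    have h5 : (2 * q - 3) ^ 2 = 5 := by linear_combination 4 * hq2'
    apply h5irr
    refine ⟨|2 * q - 3|, ?_⟩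
    have h5R : ((2 * q - 3 : ℚ) : ℝ) ^ 2 = 5 := by exact_mod_cast h5
    rw [← h5R, Real.sqrt_sq_eq_abs]
    push_cast [Rat.cast_abs]
    ring
  -- linear independence helper
  have hlin : ∀ (x1 y1 : ℤ) (c : ℚ), y1 ≠ 0 → (x1 : ℝ) + (y1 : ℝ) * A = (c : ℝ) → False := by
    intro x1 y1 c hy1 h
    apply hAirr
    refine ⟨(c - (x1 : ℚ)) / (y1 : ℚ), ?_⟩
    have hy1R : ((y1 : ℚ) : ℝ) ≠ 0 := by exact_mod_cast hy1
    push_cast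
    rw [div_eq_iff (by exact_mod_cast hy1)]
    push_cast at h ⊢
    linarith
  -- α is not real
  have hnotreal : (starRingEnd ℂ) α ≠ α := by
    intro h
    obtain ⟨r, hr⟩ := Complex.conj_eq_iff_real.mp h
    have hr0 : r ≠ 0 := by rintro rfl; simp at hr; exact hα0 hr
    have h1 : ((A : ℝ) : ℂ) * r = (r : ℂ) ^ 2 + 3 := by
      rw [hA, hr]
      have : ((r : ℝ) : ℂ) ≠ 0 := Complex.ofReal_ne_zero.mpr hr0
      field_simp
    have h2 : A * r = r ^ 2 + 3 := by exact_mod_cast h1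
    nlinarith [sq_nonneg (2 * r - A), hA2, hA3, h2]
  -- conj α = 3/α
  have hinv : α * (3 * α⁻¹) = 3 := by field_simp
  have hq1 : α ^ 2 - ((A : ℝ) : ℂ) * α + 3 = 0 := by
    rw [hA]; field_simp; ring
  have hq2 : ((starRingEnd ℂ) α) ^ 2 - ((A : ℝ) : ℂ) * ((starRingEnd ℂ) α) + 3 = 0 := by
    have := congrArg (starRingEnd ℂ) hq1
    simpa [map_sub, map_add, map_mul, map_pow, map_ofNat, Complex.conj_ofReal] using this
  have hconj : (starRingEnd ℂ) α = 3 * α⁻¹ := by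
    have hfac : ((starRingEnd ℂ) α - α) * ((starRingEnd ℂ) α - 3 * α⁻¹) = 0 := by
      linear_combination hq2 + (starRingEnd ℂ) α * hA + hinv
    rcases mul_eq_zero.mp hfac with h | h
    · exact absurd (sub_eq_zero.mp h) hnotreal
    · exact sub_eq_zero.mp h
  have hA2C : ((A : ℝ) : ℂ) ^ 2 = 3 * ((A : ℝ) : ℂ) - 1 := by exact_mod_cast hA2
  -- the representation lemma
  have rep2 : ∀ m : ℕ,
      (α ^ m + 3 ^ m * (α ^ m)⁻¹ = (((xx m : ℝ) + (yy m : ℝ) * A : ℝ) : ℂ)) ∧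
      (α ^ (m+1) + 3 ^ (m+1) * (α ^ (m+1))⁻¹
        = (((xx (m+1) : ℝ) + (yy (m+1) : ℝ) * A : ℝ) : ℂ)) := by
    intro m
    induction m with
    | zero =>
        constructor
        · show α ^ 0 + 3 ^ 0 * (α ^ 0)⁻¹ = _
          have hx0 : xx 0 = 2 := rfl
          have hy0 : yy 0 = 0 := rfl
          rw [hx0, hy0]; push_cast; norm_num
        · show α ^ 1 + 3 ^ 1 * (α ^ 1)⁻¹ = _
          have hx1 : xx 1 = 0 := rfl
          have hy1 : yy 1 = 1 := rfl
          rw [hx1, hy1]; push_cast; rw [hA]; ring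
    | succ m ih =>
        refine ⟨ih.2, ?_⟩
        have key : α ^ (m+2) + 3 ^ (m+2) * (α ^ (m+2))⁻¹
            = ((A : ℝ) : ℂ) * (α ^ (m+1) + 3 ^ (m+1) * (α ^ (m+1))⁻¹)
              - 3 * (α ^ m + 3 ^ m * (α ^ m)⁻¹) := by
          rw [hA]
          field_simp
          ring
        rw [show m + 1 + 1 = m + 2 from rfl, key, ih.1, ih.2]
        rw [xx_rec, yy_rec]
        push_cast
        linear_combination ((yy (m+1) : ℤ) : ℂ) * hA2C
  have rep : ∀ m : ℕ, α ^ m + 3 ^ m * (α ^ m)⁻¹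
      = (((xx m : ℝ) + (yy m : ℝ) * A : ℝ) : ℂ) := fun m => (rep2 m).1
  -- doubling identity
  have dbl : ∀ m : ℕ, yy (2 * m) = yy m * (2 * xx m + 3 * yy m) := by
    intro m
    have keyd : α ^ (2*m) + 3 ^ (2*m) * (α ^ (2*m))⁻¹
        = (α ^ m + 3 ^ m * (α ^ m)⁻¹) ^ 2 - 2 * 3 ^ m := by
      rw [mul_comm 2 m, pow_mul, pow_mul]
      have hu : α ^ m ≠ 0 := pow_ne_zero _ hα0
      field_simp
      ring
    have realeq : (xx (2*m) : ℝ) + (yy (2*m) : ℝ) * A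
        = ((xx m : ℝ) + (yy m : ℝ) * A) ^ 2 - 2 * 3 ^ m := by
      have := keyd
      rw [rep (2*m), rep m] at this
      have h3 : ((((xx m : ℝ) + (yy m : ℝ) * A) ^ 2 - 2 * 3 ^ m : ℝ) : ℂ)
          = (((xx m : ℝ) + (yy m : ℝ) * A : ℝ) : ℂ) ^ 2 - 2 * 3 ^ m := by
        push_cast; ring
      rw [← h3] at this
      exact_mod_cast this
    by_contra hne
    apply hlin (xx (2*m) - (xx m ^ 2 - yy m ^ 2 - 2 * 3 ^ m))
      (yy (2*m) - yy m * (2 * xx m + 3 * yy m)) 0 (sub_ne_zero.mpr hne)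
    push_cast
    linear_combination realeq + (yy m : ℝ) ^ 2 * hA2
  -- master nonvanishing
  have yne : ∀ m : ℕ, 1 ≤ m → yy m ≠ 0 := by
    intro m
    induction m using Nat.strong_induction_on with
    | _ m ih =>
      intro hm
      rcases Nat.even_or_odd m with he | ho
      · obtain ⟨k, hk⟩ := he
        have hk' : m = 2 * k := by omega
        have hk1 : 1 ≤ k := by omega
        have hklt : k < m := by omega
        rw [hk', dbl k]
        exact mul_ne_zero (ih k hklt hk1) (s_ne_zero k)
      · exact y_odd_ne_zero m (Nat.odd_iff.mp ho)
  -- main argument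
  intro n hn
  set u : ℂ := α ^ n with hu_def
  have hu : u ≠ 0 := pow_ne_zero _ hα0
  set τ : ℝ := (xx n : ℝ) + (yy n : ℝ) * A with hτ_def
  have hrep : u + 3 ^ n * u⁻¹ = ((τ : ℝ) : ℂ) := rep n
  have h1 : u ^ 2 - ((τ : ℝ) : ℂ) * u + 3 ^ n = 0 := by
    have := congrArg (· * u) hrep
    field_simp at this
    linear_combination this
  have hτC : ((τ : ℝ) : ℂ) = ((xx n : ℤ) : ℂ) + ((yy n : ℤ) : ℂ) * ((A : ℝ) : ℂ) := by
    rw [hτ_def]; push_cast; ring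
  -- the annihilating quartic
  set sI : ℤ := 2 * xx n + 3 * yy n with hsI
  set pI : ℤ := xx n ^ 2 + 3 * xx n * yy n + yy n ^ 2 with hpI
  set NI : ℤ := 3 ^ n with hNI
  set F : ℚ[X] := X ^ 4 - C ((sI : ℤ) : ℚ) * X ^ 3 + C ((2 * NI + pI : ℤ) : ℚ) * X ^ 2
      - C ((NI * sI : ℤ) : ℚ) * X + C ((NI * NI : ℤ) : ℚ) with hF
  have hFm : F.Monic := by
    rw [hF]; monicity!
  have hFdeg : F.natDegree = 4 := by
    rw [hF]; compute_degree!
  have hFa : (aeval u) F = 0 := by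
    rw [hF, hsI, hpI, hNI]
    simp only [map_sub, map_add, map_mul, map_pow, aeval_X, aeval_C, eq_ratCast]
    push_cast
    rw [hτC] at h1
    linear_combination (u ^ 2 - ((2 * ((xx n : ℤ):ℂ) + 3 * ((yy n : ℤ):ℂ)) - (((xx n : ℤ):ℂ) + ((yy n : ℤ):ℂ) * ((A:ℝ):ℂ))) * u + (3:ℂ) ^ n) * h1 + ((yy n : ℤ):ℂ) ^ 2 * u ^ 2 * hA2C
  have hIu : IsIntegral ℚ u := ⟨F, hFm, hFa⟩
  haveI : FiniteDimensional ℚ ℚ⟮u⟯ := adjoin.finiteDimensional hIu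
  have hEfr : finrank ℚ ℚ⟮u⟯ = (minpoly ℚ u).natDegree := adjoin.finrank hIu
  have hd4 : finrank ℚ ℚ⟮u⟯ ≤ 4 := by
    rw [hEfr, ← hFdeg]
    exact natDegree_le_natDegree (minpoly.min ℚ u hFm hFa)
  -- the quadratic subfield
  set t : ℂ := ((τ : ℝ) : ℂ) with ht_def
  set G : ℚ[X] := X ^ 2 - C ((sI : ℤ) : ℚ) * X + C ((pI : ℤ) : ℚ) with hG
  have hGm : G.Monic := by rw [hG]; monicity!
  have hGdeg : G.natDegree = 2 := by rw [hG]; compute_degree!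
  have hτq : τ ^ 2 - (sI : ℝ) * τ + (pI : ℝ) = 0 := by
    rw [hτ_def, hsI, hpI]
    push_cast
    linear_combination (yy n : ℝ) ^ 2 * hA2
  have hGa : (aeval t) G = 0 := by
    rw [hG]
    simp only [map_sub, map_add, map_mul, map_pow, aeval_X, aeval_C, eq_ratCast]
    rw [ht_def]
    have h0 : ((τ ^ 2 - (sI : ℝ) * τ + (pI : ℝ) : ℝ) : ℂ) = 0 := by rw [hτq]; norm_num
    refine Eq.trans ?_ h0
    push_cast
    ring
  have hIt : IsIntegral ℚ t := ⟨G, hGm, hGa⟩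
  have htnot : t ∉ (algebraMap ℚ ℂ).range := by
    rintro ⟨q, hq⟩
    have hq' : ((q : ℝ) : ℂ) = ((τ : ℝ) : ℂ) := by
      rw [← ht_def, ← hq, eq_ratCast]; norm_cast
    have hq2 : τ = (q : ℝ) := by exact_mod_cast hq'.symm
    exact hlin (xx n) (yy n) q (yne n hn) (by rw [← hτ_def, hq2])
  have hF'fr : finrank ℚ ℚ⟮t⟯ = 2 := by
    rw [adjoin.finrank hIt]
    refine le_antisymm ?_ ((minpoly.two_le_natDegree_iff hIt).mpr htnot)
    rw [← hGdeg]
    exact natDegree_le_natDegree (minpoly.min ℚ t hGm hGa)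
  have h3mem : (3 : ℂ) ∈ ℚ⟮u⟯ := by
    have := IntermediateField.algebraMap_mem ℚ⟮u⟯ (3 : ℚ)
    simpa using this
  have htmem : t ∈ ℚ⟮u⟯ := by
    rw [← hrep]
    exact add_mem (mem_adjoin_simple_self ℚ u)
      (mul_mem (pow_mem h3mem n) (inv_mem (mem_adjoin_simple_self ℚ u)))
  have hle : ℚ⟮t⟯ ≤ ℚ⟮u⟯ := adjoin_simple_le_iff.mpr htmem
  have hdvd : 2 ∣ finrank ℚ ℚ⟮u⟯ := by
    have := IntermediateField.finrank_bot_mul_relfinrank hle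
    rw [hF'fr] at this
    exact ⟨_, this.symm⟩
  have hpos : 0 < finrank ℚ ℚ⟮u⟯ := Module.finrank_pos
  have hne2 : finrank ℚ ℚ⟮u⟯ ≠ 2 := by
    intro h2
    have heq : ℚ⟮t⟯ = ℚ⟮u⟯ :=
      IntermediateField.eq_of_le_of_finrank_eq hle (hF'fr.trans h2.symm)
    have humem : u ∈ ℚ⟮t⟯ := heq ▸ mem_adjoin_simple_self ℚ u
    -- ℚ⟮t⟯ consists of real numbers
    have hKle : ℚ⟮t⟯ ≤ Subfield.toIntermediateField (K := ℚ) Complex.ofRealHom.fieldRange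
        (fun q => ⟨(q : ℝ), by push_cast; simp⟩) := by
      apply adjoin_simple_le_iff.mpr
      exact ⟨τ, rfl⟩
    obtain ⟨r, hr⟩ := hKle humem
    have hconju : (starRingEnd ℂ) u = u := by
      rw [← hr]; exact Complex.conj_ofReal r
    have hconju' : (starRingEnd ℂ) u = 3 ^ n * u⁻¹ := by
      rw [hu_def, map_pow, hconj, mul_pow, inv_pow]
    have hu2 : u * u = 3 ^ n := by
      have h' : u = 3 ^ n * u⁻¹ := hconju.symm.trans hconju'
      have h'' := congrArg (· * u) h'
      rw [mul_assoc, inv_mul_cancel₀ hu, mul_one] at h''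
      exact h'' 
    -- evaluate at 2n
    have h2n : α ^ (2*n) + 3 ^ (2*n) * (α ^ (2*n))⁻¹ = 2 * (3:ℂ) ^ n := by
      rw [mul_comm 2 n, pow_mul, pow_mul, ← hu_def]
      rw [show u ^ 2 = (3:ℂ) ^ n by linear_combination hu2]
      have h3n : (3:ℂ) ^ n ≠ 0 := pow_ne_zero _ (by norm_num)
      field_simp
      ring
    have := rep (2*n)
    rw [h2n] at this
    have hreal : (xx (2*n) : ℝ) + (yy (2*n) : ℝ) * A = ((2 * 3 ^ n : ℚ) : ℝ) := by
      have h' : (((xx (2*n) : ℝ) + (yy (2*n) : ℝ) * A : ℝ) : ℂ)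
          = (((2 * 3 ^ n : ℚ) : ℝ) : ℂ) := by rw [← this]; push_cast; ring
      exact_mod_cast h'
    exact hlin (xx (2*n)) (yy (2*n)) (2 * 3 ^ n) (yne (2*n) (by omega)) hreal
  omega
end
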